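/- arXiv:2511.09126 — 4 statements merged into one kernel-verified Lean document; each statement's English description precedes it below -/
import Mathlib

section
/- Let ψ : ℤ^m → M ≅ ℤ^d be a surjective lattice homomorphism, ψ(e_j) = α_j, and let n_1, …, n_p ∈ ℤ^m generate ker ψ, with relation matrix R ∈ ℤ^{p×m} whose i-th row is n_i. Suppose the submatrix of R formed by some m−d of the rows has rank m−d. Then for any indices 1 ≤ j_1 < ⋯ < j_d ≤ m, the wedge α_{j_1} ∧ ⋯ ∧ α_{j_d} vanishes in Λ^d(M ⊗ ℚ) if and only if the (m−d)×(m−d) minor of that submatrix obtained by deleting columns j_1, …, j_d vanishes. -/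
/-!
Over `ℚ`, let `P` be the matrix with rows `α_t` and `B` the chosen rows of the relation matrix.
A left inverse of `P` over `ℤ`, which exists because the `α_t` span `ℤ^d`, survives base change,
so the left kernel of `P` has dimension `m - d`. It contains the `m - d` rows of `B`, which are
independent because `B` has rank `m - d`, so they form a basis of it. The minor of `P` on the
rows `j` is singular iff some nonzero left-kernel vector is supported on `range j`. Writing that
vector as `y ᵥ* B`, this says that `y ᵥ* B` vanishes on the complementary columns `jc`, i.e. that
the minor of `B` on these columns is singular.
-/

open Function Matrix Module Set

namespace Matrix

variable {R K ι κ σ : Type*} [Fintype κ] [Fintype σ]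

lemma det_submatrix_cols_eq_zero_iff [CommRing R] [IsDomain R] [DecidableEq σ]
    {B : Matrix σ ι R} (hB : LinearIndependent R B.row) (f : σ → ι) :
    (B.submatrix id f).det = 0 ↔
      ∃ x ∈ Submodule.span R (range B.row), x ≠ 0 ∧ ∀ s, x (f s) = 0 := by
  rw [← exists_vecMul_eq_zero_iff, ← range_vecMulLinear]
  constructor
  · rintro ⟨y, hy, hyB⟩
    refine ⟨y ᵥ* B, ⟨y, rfl⟩, fun h => hy ?_, fun s => congrFun hyB s⟩
    exact vecMul_injective_iff.mpr hB (h.trans (zero_vecMul B).symm)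
  · rintro ⟨_, ⟨y, rfl⟩, hx, hxf⟩
    exact ⟨y, by rintro rfl; exact hx (zero_vecMul B), funext hxf⟩

variable [Fintype ι]

lemma vecMul_surjective_map {S : Type*} [CommRing R] [CommRing S] [DecidableEq κ] (f : R →+* S)
    {P : Matrix ι κ R} (hP : Surjective P.vecMul) : Surjective (P.map f).vecMul := by
  obtain ⟨Q, hQP⟩ := vecMul_surjective_iff_exists_left_inverse.mp hP
  exact vecMul_surjective_iff_exists_left_inverse.mpr ⟨Q.map f, by
    rw [← Matrix.map_mul, hQP, Matrix.map_one _ f.map_zero f.map_one]⟩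

lemma vecMul_comp_submatrix [NonUnitalNonAssocSemiring R] (P : Matrix ι κ R) {g : κ → ι}
    (hg : Injective g) {x : ι → R} (hx : ∀ t ∉ range g, x t = 0) :
    (x ∘ g) ᵥ* P.submatrix g id = x ᵥ* P := by
  ext k
  exact Fintype.sum_of_injective g hg _ _ (fun t ht => by simp [hx t ht]) fun _ => rfl

lemma det_submatrix_rows_eq_zero_iff [CommRing R] [IsDomain R] [DecidableEq κ]
    (P : Matrix ι κ R) {g : κ → ι} (hg : Injective g) :
    (P.submatrix g id).det = 0 ↔ ∃ x, x ≠ 0 ∧ x ᵥ* P = 0 ∧ ∀ t ∉ range g, x t = 0 := by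
  rw [← exists_vecMul_eq_zero_iff]
  constructor
  · rintro ⟨c, hc, hcP⟩
    have hx : ∀ t ∉ range g, extend g c 0 t = 0 := fun t ht => extend_apply' _ _ _ ht
    refine ⟨extend g c 0, fun h => hc ?_, ?_, hx⟩
    · rw [← extend_comp hg c 0, h]; rfl
    · rw [← vecMul_comp_submatrix P hg hx, extend_comp hg, hcP]
  · rintro ⟨x, hx, hxP, hxg⟩
    refine ⟨x ∘ g, fun h => hx ?_, by rw [vecMul_comp_submatrix P hg hxg, hxP]⟩
    ext t
    by_cases ht : t ∈ range g
    · obtain ⟨k, rfl⟩ := ht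
      exact congrFun h k
    · exact hxg t ht

theorem det_submatrix_eq_zero_iff_det_complementary_submatrix_eq_zero
    [CommRing R] [IsDomain R] [DecidableEq κ] [DecidableEq σ] {P : Matrix ι κ R}
    {B : Matrix σ ι R} (hB : LinearIndependent R B.row)
    (hspan : Submodule.span R (range B.row) = LinearMap.ker P.vecMulLinear)
    {g : κ → ι} (hg : Injective g) {f : σ → ι} (hfg : IsCompl (range g) (range f)) :
    (P.submatrix g id).det = 0 ↔ (B.submatrix id f).det = 0 := by
  rw [det_submatrix_rows_eq_zero_iff P hg, det_submatrix_cols_eq_zero_iff hB, hspan]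
  have hsupp : ∀ x : ι → R, (∀ t ∉ range g, x t = 0) ↔ ∀ s, x (f s) = 0 := fun x => by
    show (∀ t ∈ (range g)ᶜ, x t = 0) ↔ _
    rw [hfg.compl_eq, forall_mem_range]
  simp only [hsupp, LinearMap.mem_ker, vecMulLinear_apply]
  exact exists_congr fun x => by tauto

variable [Field K]

lemma linearIndependent_row_of_rank_eq_card {B : Matrix σ ι K} (hB : B.rank = Fintype.card σ) :
    LinearIndependent K B.row := by
  rw [linearIndependent_iff_card_eq_finrank_span, Set.finrank, ← rank_eq_finrank_span_row, hB]

lemma span_row_eq_ker_vecMulLinear {P : Matrix ι κ K} (hP : Surjective P.vecMul)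
    {B : Matrix σ ι K} (hBP : B * P = 0) (hrank : B.rank + Fintype.card κ = Fintype.card ι) :
    Submodule.span K (range B.row) = LinearMap.ker P.vecMulLinear := by
  have hle : Submodule.span K (range B.row) ≤ LinearMap.ker P.vecMulLinear := by
    rw [Submodule.span_le]
    rintro _ ⟨s, rfl⟩
    exact congrFun hBP s
  refine Submodule.eq_of_le_of_finrank_eq hle ?_
  have hrange : LinearMap.range P.vecMulLinear = ⊤ := LinearMap.range_eq_top.mpr hP
  have := P.vecMulLinear.finrank_range_add_finrank_ker
  rw [hrange, finrank_top, finrank_fintype_fun_eq_card, finrank_fintype_fun_eq_card] at this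
  rw [← rank_eq_finrank_span_row]
  omega

end Matrix

theorem stmt4_general (d m p : ℕ) (hdm : d ≤ m)
    (α : Fin m → (Fin d → ℤ))
    (hsurj : Submodule.span ℤ (Set.range α) = (⊤ : Submodule ℤ (Fin d → ℤ)))
    (N : Fin p → (Fin m → ℤ))
    (hker : ∀ x : Fin m → ℤ,
      (∑ j, x j • α j = 0) ↔ x ∈ Submodule.span ℤ (Set.range N))
    (r : Fin (m - d) → Fin p)
    (hrank : Matrix.rank (Matrix.of fun s t => ((N (r s) t : ℚ))) = m - d)
    (j : Fin d → Fin m) (hj : StrictMono j)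
    (jc : Fin (m - d) → Fin m)
    (hcompl : Set.range j ∪ Set.range jc = Set.univ)
    (hdisj : Disjoint (Set.range j) (Set.range jc)) :
    Matrix.det (Matrix.of fun l i : Fin d => (α (j l) i : ℚ)) = 0 ↔
      Matrix.det (Matrix.of fun s t : Fin (m - d) => (N (r s) (jc t) : ℚ)) = 0 := by
  set P : Matrix (Fin m) (Fin d) ℚ := (of α).map (Int.castRingHom ℚ)
  set B : Matrix (Fin (m - d)) (Fin m) ℚ := ((of N).map (Int.castRingHom ℚ)).submatrix r id
  have hP : Function.Surjective P.vecMul := by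
    have hα : LinearMap.range (of α).vecMulLinear = ⊤ := by rwa [range_vecMulLinear]
    exact vecMul_surjective_map (Int.castRingHom ℚ) (LinearMap.range_eq_top.mp hα)
  have hNα : of N * of α = 0 := by
    ext i k
    have hi : N i ᵥ* of α = 0 := by
      rw [vecMul_eq_sum]
      exact (hker (N i)).mpr (Submodule.subset_span ⟨i, rfl⟩)
    exact congrFun hi k
  have hBP : B * P = 0 := calc
    B * P = ((of N * of α).map (Int.castRingHom ℚ)).submatrix r id := by rw [Matrix.map_mul]; rfl
    _ = 0 := by simp [hNα]
  have hBrank : B.rank = m - d := hrank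
  exact det_submatrix_eq_zero_iff_det_complementary_submatrix_eq_zero
    (linearIndependent_row_of_rank_eq_card (by simpa using hBrank))
    (span_row_eq_ker_vecMulLinear hP hBP (by simp [hBrank]; omega))
    hj.injective ⟨hdisj, codisjoint_iff.mpr hcompl⟩

/-- Lemma on Grassmann / Plücker coordinates: with ψ : ℤ^m → ℤ^d surjective,
ψ(e_j) = α_j, relation vectors n_1,…,n_p generating ker ψ, and a choice of
m−d rows of the relation matrix of rank m−d, the wedge
α_{j_1} ∧ ⋯ ∧ α_{j_d} vanishes (i.e. the determinant of the matrix of the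
α_{j_l} over ℚ vanishes) iff the (m−d)×(m−d) minor of the chosen rows on the
complementary columns vanishes. -/
theorem stmt4 (d m p : ℕ) (hdm : d ≤ m)
    (α : Fin m → (Fin d → ℤ))
    (hsurj : Submodule.span ℤ (Set.range α) = (⊤ : Submodule ℤ (Fin d → ℤ)))
    (N : Fin p → (Fin m → ℤ))
    (hker : ∀ x : Fin m → ℤ,
      (∑ j, x j • α j = 0) ↔ x ∈ Submodule.span ℤ (Set.range N))
    (r : Fin (m - d) → Fin p) (hr : Function.Injective r)
    (hrank : Matrix.rank (Matrix.of fun s t => ((N (r s) t : ℚ))) = m - d)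
    (j : Fin d → Fin m) (hj : StrictMono j)
    (jc : Fin (m - d) → Fin m) (hjc : StrictMono jc)
    (hcompl : Set.range j ∪ Set.range jc = Set.univ)
    (hdisj : Disjoint (Set.range j) (Set.range jc)) :
    Matrix.det (Matrix.of fun l i : Fin d => (α (j l) i : ℚ)) = 0 ↔
      Matrix.det (Matrix.of fun s t : Fin (m - d) => (N (r s) (jc t) : ℚ)) = 0 :=
  stmt4_general d m p hdm α hsurj N hker r hrank j hj jc hcompl hdisj
end

section
/- Let Γ ⊂ M be the semigroup generated by γ_1 = e_1, …, γ_d = e_d, γ_{d+1} = λ̄_1, …, γ_{d+g} = λ̄_g, and let γ_0 = Σ_{j=1}^g (n_j − 1) λ̄_j − Σ_{i=1}^d e_i. Then γ_0 is a Frobenius vector of Γ: for every α ∈ int(σ^∨) ∩ M (where σ^∨ = ℝ_{≥0}^d and M = ℤ^d + ℤλ_1 + ⋯ + ℤλ_g), the element γ_0 + α lies in Γ. -/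
/-!
Induction on `j`: with `Γ_j` generated by `e_1, …, e_d, λ̄_1, …, λ̄_j`, the vector
`γ_j = Σ_{k ≤ j} (n_k - 1) λ̄_k - 1` is a Frobenius vector of `Γ_j` relative to `M_j`.
For `j = 0` this says that a positive integer vector minus `1` lies in `ℕ^d`.
For the step, `λ̄_{j+1} ≡ λ_{j+1} (mod M_j)`, so `M_{j+1} = M_j + ℤ λ̄_{j+1}`, while
`n_{j+1} λ̄_{j+1} ∈ M_j` because `n_{j+1}` is the index. Hence every `a ∈ M_{j+1}` has
`a + m λ̄_{j+1} ∈ M_j` for some `0 ≤ m < n_{j+1}`; this vector is still positive since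
`λ̄_{j+1} ≥ 0`, and `γ_{j+1} + a = (γ_j + a + m λ̄_{j+1}) + (n_{j+1} - 1 - m) λ̄_{j+1}`.
-/

namespace AddSubgroup

variable {G : Type*}

theorem closure_union_image_Icc_succ [AddGroup G] (s : Set G) (f : ℕ → G) (j : ℕ) :
    closure (s ∪ f '' Set.Icc 1 (j + 1)) =
      closure (s ∪ f '' Set.Icc 1 j) ⊔ zmultiples (f (j + 1)) := by
  have hIcc : Set.Icc 1 (j + 1) = Set.Icc 1 j ∪ {j + 1} := by
    ext m; simp only [Set.mem_Icc, Set.mem_union, Set.mem_singleton_iff]; omega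
  rw [hIcc, Set.image_union, Set.image_singleton, ← Set.union_assoc, closure_union,
    zmultiples_eq_closure]

variable [AddCommGroup G] {H : AddSubgroup G}

theorem sup_zmultiples_le_sup_zmultiples_of_sub_mem {b l : G} (h : b - l ∈ H) :
    H ⊔ zmultiples l ≤ H ⊔ zmultiples b := by
  refine sup_le le_sup_left (zmultiples_le.mpr ?_)
  rw [show l = b - (b - l) by abel]
  exact sub_mem (mem_sup_right (mem_zmultiples b)) (mem_sup_left h)

theorem exists_add_nsmul_mem_of_mem_sup_zmultiples {b x : G} {n : ℕ} (hn : 0 < n)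
    (hnb : n • b ∈ H) (hx : x ∈ H ⊔ zmultiples b) : ∃ m < n, x + m • b ∈ H := by
  obtain ⟨y, hy, _, ⟨k, rfl⟩, rfl⟩ := mem_sup.mp hx
  have hn' : (0 : ℤ) < n := by exact_mod_cast hn
  refine ⟨(-k % n).toNat, by have := Int.emod_lt_of_pos (-k) hn'; omega, ?_⟩
  have hdiv : k + -k % n = n * -(-k / n) := by
    have := Int.emod_add_mul_ediv (-k) n; linarith
  have : y + k • b + (-k % n).toNat • b = y + (-(-k / n)) • (n • b) := by
    rw [add_assoc, ← natCast_zsmul, Int.toNat_of_nonneg (Int.emod_nonneg _ hn'.ne'),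
      ← add_zsmul, hdiv, mul_comm, mul_zsmul, natCast_zsmul]
  rw [this]
  exact add_mem hy (zsmul_mem hnb _)

end AddSubgroup

section Chain

variable {α : Type*} (s : Set α) (f : ℕ → α)

theorem union_image_Icc_mono : Monotone fun j => s ∪ f '' Set.Icc 1 j :=
  fun _ _ h => Set.union_subset_union_right _ (Set.image_mono (Set.Icc_subset_Icc_right h))

theorem mem_union_image_Icc_self {j : ℕ} (hj : 1 ≤ j) : f j ∈ s ∪ f '' Set.Icc 1 j :=
  Or.inr ⟨j, ⟨hj, le_rfl⟩, rfl⟩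

end Chain

section Recursion

variable {V : Type*} {g : ℕ} {n : ℕ → ℕ}

theorem lamb_mem [AddCommGroup V] [Module ℚ V] {lam lamb : ℕ → V} {M : ℕ → AddSubgroup V}
    (hM : Monotone M) (hlam : ∀ j, 1 ≤ j → lam j ∈ M j) (hb1 : lamb 1 = lam 1)
    (hbrec : ∀ j, 1 ≤ j → j < g → lamb (j + 1) = (n j : ℚ) • lamb j + lam (j + 1) - lam j) :
    ∀ j, 1 ≤ j → j ≤ g → lamb j ∈ M j := by
  intro j hj
  induction j, hj using Nat.le_induction with
  | base => intro; rw [hb1]; exact hlam 1 le_rfl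
  | succ j hj ih =>
    intro hjg
    rw [hbrec j hj (by omega), Nat.cast_smul_eq_nsmul]
    exact sub_mem (add_mem (hM j.le_succ (nsmul_mem (ih (by omega)) _)) (hlam _ (by omega)))
      (hM j.le_succ (hlam j hj))

theorem lamb_sub_lam_mem [AddCommGroup V] [Module ℚ V] {lam lamb : ℕ → V}
    {M : ℕ → AddSubgroup V} (hM : Monotone M) (hlam : ∀ j, 1 ≤ j → lam j ∈ M j)
    (hb1 : lamb 1 = lam 1)
    (hbrec : ∀ j, 1 ≤ j → j < g → lamb (j + 1) = (n j : ℚ) • lamb j + lam (j + 1) - lam j)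
    {j : ℕ} (hj : j < g) : lamb (j + 1) - lam (j + 1) ∈ M j := by
  rcases Nat.eq_zero_or_pos j with rfl | hj1
  · rw [zero_add, hb1, sub_self]; exact zero_mem _
  · rw [hbrec j hj1 hj, sub_right_comm, add_sub_cancel_right, Nat.cast_smul_eq_nsmul]
    exact sub_mem (nsmul_mem (lamb_mem hM hlam hb1 hbrec j hj1 hj.le) _) (hlam j hj1)

theorem lamb_nonneg {ι : Type*} {lam lamb : ℕ → ι → ℚ}
    (hlam : ∀ j, 1 ≤ j → j ≤ g → 0 ≤ lam j)
    (hchain : ∀ j, 1 ≤ j → j < g → lam j ≤ lam (j + 1)) (hb1 : lamb 1 = lam 1)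
    (hbrec : ∀ j, 1 ≤ j → j < g → lamb (j + 1) = (n j : ℚ) • lamb j + lam (j + 1) - lam j) :
    ∀ j, 1 ≤ j → j ≤ g → 0 ≤ lamb j := by
  intro j hj
  induction j, hj using Nat.le_induction with
  | base => intro h1g; rw [hb1]; exact hlam 1 le_rfl h1g
  | succ j hj ih =>
    intro hjg
    rw [hbrec j hj (by omega), add_sub_assoc]
    exact add_nonneg (smul_nonneg (Nat.cast_nonneg _) (ih (by omega)))
      (sub_nonneg.mpr (hchain j hj (by omega)))

end Recursion

section Frobenius

variable {ι : Type*}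

/-- The hypotheses on `a` say `a ∈ int(σ^∨) ∩ M`, with `σ^∨` the positive orthant. -/
def IsFrobeniusVector (γ : ι → ℚ) (M : AddSubgroup (ι → ℚ)) (Γ : AddSubmonoid (ι → ℚ)) :
    Prop :=
  ∀ a : ι → ℚ, (∀ i, 0 < a i) → a ∈ M → γ + a ∈ Γ

theorem IsFrobeniusVector.mono {γ : ι → ℚ} {M : AddSubgroup (ι → ℚ)}
    {Γ Γ' : AddSubmonoid (ι → ℚ)} (h : IsFrobeniusVector γ M Γ) (hΓ : Γ ≤ Γ') :
    IsFrobeniusVector γ M Γ' :=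
  fun a ha haM => hΓ (h a ha haM)

theorem IsFrobeniusVector.add_smul_of_le_sup_zmultiples {γ b : ι → ℚ}
    {H K : AddSubgroup (ι → ℚ)} {Γ : AddSubmonoid (ι → ℚ)} {n : ℕ}
    (h : IsFrobeniusVector γ H Γ) (hK : K ≤ H ⊔ AddSubgroup.zmultiples b) (hn : 0 < n)
    (hnb : n • b ∈ H) (hb : 0 ≤ b) (hbΓ : b ∈ Γ) :
    IsFrobeniusVector (γ + ((n : ℚ) - 1) • b) K Γ := by
  intro a ha haK
  obtain ⟨m, hmn, hm⟩ := AddSubgroup.exists_add_nsmul_mem_of_mem_sup_zmultiples hn hnb (hK haK)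
  have hpos : ∀ i, 0 < (a + m • b) i := fun i =>
    add_pos_of_pos_of_nonneg (ha i) (nsmul_nonneg (hb i) m)
  obtain ⟨k, rfl⟩ := Nat.exists_eq_add_of_lt hmn
  have hsplit : γ + (((m + k + 1 : ℕ) : ℚ) - 1) • b + a = (γ + (a + m • b)) + k • b := by
    push_cast; module
  rw [hsplit]
  exact add_mem (h _ hpos hm) (nsmul_mem hbΓ k)

variable [DecidableEq ι]

theorem exists_int_eq_of_mem_closure_single {a : ι → ℚ}
    (ha : a ∈ AddSubgroup.closure (Set.range fun i => (Pi.single i 1 : ι → ℚ))) (i : ι) :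
    ∃ m : ℤ, a i = m := by
  suffices AddSubgroup.closure (Set.range fun i => (Pi.single i 1 : ι → ℚ)) ≤
      AddSubgroup.pi Set.univ fun _ => (Int.castAddHom ℚ).range from
    (this ha i (Set.mem_univ i)).imp fun _ h => h.symm
  rw [AddSubgroup.closure_le]
  rintro _ ⟨j, rfl⟩ i -
  by_cases h : i = j
  · subst h; exact ⟨1, by simp⟩
  · exact ⟨0, by simp [h]⟩

theorem mem_closure_single_of_forall_eq_natCast [Fintype ι] {a : ι → ℚ}
    (ha : ∀ i, ∃ m : ℕ, a i = m) :
    a ∈ AddSubmonoid.closure (Set.range fun i => (Pi.single i 1 : ι → ℚ)) := by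
  choose m hm using ha
  rw [← Finset.univ_sum_single a]
  refine sum_mem fun i _ => ?_
  have : Pi.single i (m i : ℚ) = m i • (Pi.single i 1 : ι → ℚ) := by
    rw [← Pi.single_smul]; simp
  rw [hm i, this]
  exact nsmul_mem (AddSubmonoid.subset_closure (Set.mem_range_self i)) _

theorem isFrobeniusVector_neg_one [Fintype ι] :
    IsFrobeniusVector (-1)
      (AddSubgroup.closure (Set.range fun i => (Pi.single i 1 : ι → ℚ)))
      (AddSubmonoid.closure (Set.range fun i => (Pi.single i 1 : ι → ℚ))) := by
  intro a ha haM
  apply mem_closure_single_of_forall_eq_natCast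
  intro i
  obtain ⟨m, hm⟩ := exists_int_eq_of_mem_closure_single haM i
  have hm1 : 1 ≤ m := by exact_mod_cast hm ▸ ha i
  refine ⟨(m - 1).toNat, ?_⟩
  have : ((m - 1).toNat : ℤ) = m - 1 := Int.toNat_of_nonneg (by omega)
  rw [Pi.add_apply, hm, Pi.neg_apply, Pi.one_apply, ← Int.cast_natCast, this]
  push_cast; ring

end Frobenius

/-- γ₀ = Σ_{j=1}^g (n_j − 1) λ̄_j − Σ_{i=1}^d e_i is a Frobenius vector of the
semigroup Γ generated by e_1,…,e_d, λ̄_1,…,λ̄_g: for every α ∈ int(σ^∨) ∩ M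
one has γ₀ + α ∈ Γ. -/
theorem stmt13 (d g : ℕ) (lam lamb : ℕ → (Fin d → ℚ)) (n : ℕ → ℕ)
    (Msub : ℕ → AddSubgroup (Fin d → ℚ))
    (hM : ∀ j, Msub j = AddSubgroup.closure
      ((Set.range fun i : Fin d => (Pi.single i 1 : Fin d → ℚ)) ∪
        (lam '' Set.Icc 1 j)))
    (hpos : ∀ j, 1 ≤ j → j ≤ g → ∀ i, 0 ≤ lam j i)
    (hchain : ∀ j, 1 ≤ j → j < g → lam j ≤ lam (j + 1) ∧ lam j ≠ lam (j + 1))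
    (hn : ∀ j, 1 ≤ j → j ≤ g → 2 ≤ n j)
    (hindex : ∀ j, 1 ≤ j → j ≤ g → (Msub (j - 1)).relIndex (Msub j) = n j)
    (hb1 : lamb 1 = lam 1)
    (hbrec : ∀ j, 1 ≤ j → j < g →
      lamb (j + 1) = (n j : ℚ) • lamb j + lam (j + 1) - lam j)
    (Γ : AddSubmonoid (Fin d → ℚ))
    (hΓ : Γ = AddSubmonoid.closure
      ((Set.range fun i : Fin d => (Pi.single i 1 : Fin d → ℚ)) ∪
        (lamb '' Set.Icc 1 g)))
    (γ0 : Fin d → ℚ)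
    (hγ0 : γ0 = (∑ j ∈ Finset.Icc 1 g, ((n j : ℚ) - 1) • lamb j)
      - ∑ i : Fin d, Pi.single i 1) :
    ∀ a : Fin d → ℚ, (∀ i, 0 < a i) → a ∈ Msub g → γ0 + a ∈ Γ := by
  set E := Set.range fun i : Fin d => (Pi.single i 1 : Fin d → ℚ)
  have hMmono : Monotone Msub := fun j k h => by
    rw [hM, hM]; exact AddSubgroup.closure_mono (union_image_Icc_mono E lam h)
  have hlam : ∀ j, 1 ≤ j → lam j ∈ Msub j := fun j hj => by
    rw [hM]; exact AddSubgroup.subset_closure (mem_union_image_Icc_self E lam hj)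
  have hsup (j) (hj : j < g) : Msub (j + 1) ≤ Msub j ⊔ AddSubgroup.zmultiples (lamb (j + 1)) := by
    rw [hM (j + 1), AddSubgroup.closure_union_image_Icc_succ, ← hM]
    exact AddSubgroup.sup_zmultiples_le_sup_zmultiples_of_sub_mem
      (lamb_sub_lam_mem hMmono hlam hb1 hbrec hj)
  have hnsmul (j) (hj : j < g) : n (j + 1) • lamb (j + 1) ∈ Msub j := by
    rw [← hindex (j + 1) (by omega) hj]
    exact (Msub j).nsmul_relIndex_mem (lamb_mem hMmono hlam hb1 hbrec (j + 1) (by omega) hj)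
  have hnonneg := lamb_nonneg hpos (fun j hj hjg => (hchain j hj hjg).1) hb1 hbrec
  suffices ∀ j ≤ g, IsFrobeniusVector (∑ k ∈ Finset.Icc 1 j, ((n k : ℚ) - 1) • lamb k - 1)
      (Msub j) (AddSubmonoid.closure (E ∪ lamb '' Set.Icc 1 j)) by
    have hone : ∑ i, (Pi.single i 1 : Fin d → ℚ) = 1 := Finset.univ_sum_single 1
    rw [hγ0, hΓ, hone]; exact this g le_rfl
  intro j
  induction j with
  | zero => intro; simpa [hM 0] using isFrobeniusVector_neg_one
  | succ j ih =>
    intro hj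
    rw [Finset.sum_Icc_succ_top (by omega), add_sub_right_comm]
    refine ((ih (by omega)).mono ?_).add_smul_of_le_sup_zmultiples (hsup j hj)
      (by have := hn (j + 1) (by omega) hj; omega) (hnsmul j hj) (hnonneg (j + 1) (by omega) hj)
      (AddSubmonoid.subset_closure (mem_union_image_Icc_self E lamb (by omega)))
    exact AddSubmonoid.closure_mono (union_image_Icc_mono E lamb j.le_succ)
end

section
/- Let Γ be the semigroup generated by e_1, …, e_d and λ̄_1, …, λ̄_g with relations n_j λ̄_j = ℓ_1^{(j)} e_1 + ⋯ + ℓ_d^{(j)} e_d + ℓ_{d+1}^{(j)} λ̄_1 + ⋯ + ℓ_{d+j−1}^{(j)} λ̄_{j−1}, where ℓ_k^{(j)} ∈ ℤ_{≥0} and 0 ≤ ℓ_{d+k}^{(j)} < n_k. Then the Poincaré series P_Γ(X) = Σ_{γ∈Γ} X^γ satisfies the symmetry P_Γ(X) = (−1)^d X^{γ_0} P_{−Γ}(X), where γ_0 = Σ_{j=1}^g (n_j − 1) λ̄_j − Σ_{i=1}^d e_i, given the rational form P_Γ(X) = Π_{j=1}^g (1 − X^{n_j λ̄_j}) Π_{j=1}^g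 (1 − X^{λ̄_j})^{−1} Π_{i=1}^d (1 − X^{e_i})^{−1}. -/
private lemma fmul {M : Type*} [AddCommGroup M] (a b : M) :
    (AddMonoidAlgebra.single a (1:ℂ)) * AddMonoidAlgebra.single b 1
      = AddMonoidAlgebra.single (a + b) 1 := by
  simp [AddMonoidAlgebra.single_mul_single]

private lemma prodf {M ι : Type*} [AddCommGroup M] (s : Finset ι) (a : ι → M) :
    ∏ j ∈ s, AddMonoidAlgebra.single (a j) (1:ℂ)
      = AddMonoidAlgebra.single (∑ j ∈ s, a j) 1 := by
  induction s using Finset.cons_induction with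
  | empty => simp [AddMonoidAlgebra.one_def]
  | cons i s hi ih => rw [Finset.prod_cons, Finset.sum_cons, ih, fmul]

private lemma sflip {M : Type*} [AddCommGroup M] (a : M) :
    (1 : AddMonoidAlgebra ℂ M) - AddMonoidAlgebra.single a 1
      = -AddMonoidAlgebra.single a 1 * (1 - AddMonoidAlgebra.single (-a) 1) := by
  have h : AddMonoidAlgebra.single a (1:ℂ) * AddMonoidAlgebra.single (-a) 1 = 1 := by
    rw [fmul, add_neg_cancel]
    exact AddMonoidAlgebra.one_def.symm
  rw [neg_mul, mul_sub, mul_one, h, neg_sub]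

private lemma key {M ι : Type*} [AddCommGroup M] (s : Finset ι) (a : ι → M) :
    ∏ j ∈ s, ((1 : AddMonoidAlgebra ℂ M) - AddMonoidAlgebra.single (a j) 1)
      = (-1) ^ s.card * AddMonoidAlgebra.single (∑ j ∈ s, a j) 1
        * ∏ j ∈ s, (1 - AddMonoidAlgebra.single (-a j) 1) := by
  rw [Finset.prod_congr rfl fun j _ => sflip (a j), Finset.prod_mul_distrib]
  congr 1
  rw [Finset.prod_congr rfl fun j _ => (neg_one_mul (AddMonoidAlgebra.single (a j) (1:ℂ))).symm,
    Finset.prod_mul_distrib, Finset.prod_const, prodf]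

private lemma final {R : Type*} [CommRing R] (g d : ℕ) (x y z q1 q2 q3 : R) :
    ((-1) ^ g * x * q1) * (((-1) ^ g * y * q2) * ((-1) ^ d * z * q3))
      = (-1) ^ d * (x * (y * z)) * (q1 * (q2 * q3)) := by
  have h : ((-1 : R)) ^ g * (-1) ^ g = 1 := by
    rw [← pow_add]; exact Even.neg_one_pow ⟨g, rfl⟩
  linear_combination ((-1 : R) ^ d * x * y * z * q1 * q2 * q3) * h

/-- Symmetry of the Poincaré series: P_Γ(X) = (−1)^d X^{γ₀} P_{−Γ}(X).
Given the rational form P_Γ = A/B with A = Π_j (1 − X^{n_j λ̄_j}),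
B = Π_j (1 − X^{λ̄_j}) Π_i (1 − X^{e_i}), the symmetry is the identity
A(X) B(X⁻¹) = (−1)^d X^{γ₀} A(X⁻¹) B(X) in the group algebra ℂ[M]. -/
theorem stmt14 (d g : ℕ) (lam lamb : ℕ → (Fin d → ℚ)) (n : ℕ → ℕ)
    (hpos : ∀ j, 1 ≤ j → j ≤ g → ∀ i, 0 ≤ lam j i)
    (hchain : ∀ j, 1 ≤ j → j < g → lam j ≤ lam (j + 1) ∧ lam j ≠ lam (j + 1))
    (hn : ∀ j, 1 ≤ j → j ≤ g → 2 ≤ n j)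
    (hb1 : lamb 1 = lam 1)
    (hbrec : ∀ j, 1 ≤ j → j < g →
      lamb (j + 1) = (n j : ℚ) • lamb j + lam (j + 1) - lam j)
    -- the relations n_j λ̄_j = Σ_i ℓ_i^{(j)} e_i + Σ_{k<j} ℓ_{d+k}^{(j)} λ̄_k
    (L : ℕ → Fin d → ℕ) (L' : ℕ → ℕ → ℕ)
    (hrel : ∀ j, 1 ≤ j → j ≤ g →
      (n j : ℚ) • lamb j =
        (∑ i : Fin d, (L j i : ℚ) • (Pi.single i 1 : Fin d → ℚ))
          + ∑ k ∈ Finset.Icc 1 (j - 1), (L' j k : ℚ) • lamb k)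
    (hbound : ∀ j k, 1 ≤ k → k < j → j ≤ g → L' j k < n k)
    (γ0 : Fin d → ℚ)
    (hγ0 : γ0 = (∑ j ∈ Finset.Icc 1 g, ((n j : ℚ) - 1) • lamb j)
      - ∑ i : Fin d, Pi.single i 1)
    (X : (Fin d → ℚ) → AddMonoidAlgebra ℂ (Fin d → ℚ))
    (hX : ∀ γ, X γ = AddMonoidAlgebra.single γ 1) :
    (∏ j ∈ Finset.Icc 1 g, (1 - X ((n j : ℚ) • lamb j))) *
        ((∏ j ∈ Finset.Icc 1 g, (1 - X (-lamb j))) *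
          ∏ i : Fin d, (1 - X (-(Pi.single i 1 : Fin d → ℚ)))) =
      (-1 : AddMonoidAlgebra ℂ (Fin d → ℚ)) ^ d * X γ0 *
        ((∏ j ∈ Finset.Icc 1 g, (1 - X (-((n j : ℚ) • lamb j)))) *
          ((∏ j ∈ Finset.Icc 1 g, (1 - X (lamb j))) *
            ∏ i : Fin d, (1 - X (Pi.single i 1 : Fin d → ℚ)))) := by
  simp only [hX]
  have hsum : γ0 = (∑ j ∈ Finset.Icc 1 g, (n j : ℚ) • lamb j)
      + ((∑ j ∈ Finset.Icc 1 g, -lamb j) + ∑ i : Fin d, -(Pi.single i 1 : Fin d → ℚ)) := by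
    rw [hγ0]
    simp only [sub_smul, one_smul, Finset.sum_sub_distrib, Finset.sum_neg_distrib]
    abel
  have k1 := key (Finset.Icc 1 g) (fun j => (n j : ℚ) • lamb j)
  have k2 := key (Finset.Icc 1 g) (fun j => -lamb j)
  have k3 := key (Finset.univ : Finset (Fin d)) (fun i => -(Pi.single i 1 : Fin d → ℚ))
  simp only [neg_neg] at k2 k3
  simp only [Nat.card_Icc, Nat.add_sub_cancel] at k1 k2
  rw [Finset.card_univ, Fintype.card_fin] at k3
  rw [k1, k2, k3, hsum, ← fmul, ← fmul]
  exact final g d _ _ _ _ _ _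
end

section
/- Monomial ideal inclusion (Proposition on I_g ⊂ J_g, case d = 2): Let λ_1 ≺ ⋯ ≺ λ_g ∈ ℚ^2_{≥0} be characteristic exponents of a normalized quasi-ordinary surface branch, λ̄_j the semigroup generators, and m_i (i = 1, 2) as above. Then for any pair of generators γ, γ' ∈ {e_1, e_2, λ̄_1, …, λ̄_g} with γ ∧ γ' ≠ 0, there exists β in the set Ξ_g = {e_1 + e_2} ∪ { e_2 + λ_{m_1} if m_1 ≤ g } ∪ { e_1 + λ_{m_2} if m_2 ≤ g } such that β ⪯ γ + γ' coordinatewise. -/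
/-!
Everything reduces to coordinatewise estimates on `λ̄`. Since `n_j ≥ 2` and `λ̄_j ≥ λ_j ≥ 0`, the
recursion gives `λ̄_j + λ_{j+1} ≤ λ̄_{j+1}`; hence `λ̄` is monotone and dominates every earlier `λ`.
Normalization forces `m_1 = 1`, which settles the pairs containing `e_2`. Linear independence
gives a nonzero second coordinate in `λ̄_k` when paired with `e_1`, and in one of `λ̄_j, λ̄_k`
otherwise, so `m_2` is at most the larger index. For `λ̄_j + λ̄_k` the first coordinate must still
gain a unit over `λ_{m_2}`, and it comes from integrality: `n_1 λ_1` lies in `M_0 = ℤ²`, so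
`λ̄_{k,1} ≥ λ̄_{2,1} ≥ n_1 λ_{1,1} ≥ 1` for `k ≥ 2`, while `λ̄_{1,1} = λ_{1,1} > 1` if `λ_{1,2} = 0`.
-/

theorem LinearIndependent.pair_exists_ne_apply_ne_zero {K ι : Type*} [Field K] {v w : ι → K}
    (h : LinearIndependent K ![v, w]) (i : ι) : ∃ j ≠ i, v j ≠ 0 ∨ w j ≠ 0 := by
  by_contra! hvw
  have hcomb : w i • v + (-v i) • w = 0 := by
    ext j
    rcases eq_or_ne j i with rfl | hj
    · simp [mul_comm]
    · simp [(hvw j hj).1, (hvw j hj).2]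
  obtain ⟨-, hvi⟩ := LinearIndependent.pair_iff.mp h _ _ hcomb
  refine h.ne_zero 0 (funext fun j => ?_)
  rcases eq_or_ne j i with rfl | hj
  · simpa using hvi
  · exact (hvw j hj).1

/-- One coordinate of the semigroup generators: `b j = λ̄_j` and `a j = λ_j` for `1 ≤ j ≤ g`. -/
structure IsLambdaBar {K : Type*} [Field K] [LinearOrder K] (g : ℕ) (n : ℕ → ℕ) (a b : ℕ → K) :
    Prop where
  nonneg : ∀ j, 1 ≤ j → j ≤ g → 0 ≤ a j
  two_le : ∀ j, 1 ≤ j → j < g → 2 ≤ n j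
  one : b 1 = a 1
  succ : ∀ j, 1 ≤ j → j < g → b (j + 1) = n j * b j + a (j + 1) - a j

namespace IsLambdaBar

variable {K : Type*} [Field K] [LinearOrder K] [IsStrictOrderedRing K]
  {g : ℕ} {n : ℕ → ℕ} {a b : ℕ → K}

theorem add_le_succ_of_le (h : IsLambdaBar g n a b) {k : ℕ} (hk : 1 ≤ k) (hkg : k < g)
    (hab : a k ≤ b k) : b k + a (k + 1) ≤ b (k + 1) := by
  have hak := h.nonneg k hk hkg.le
  have hnk : (2 : K) ≤ n k := mod_cast h.two_le k hk hkg
  have : 2 * b k ≤ n k * b k := mul_le_mul_of_nonneg_right hnk (hak.trans hab)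
  rw [h.succ k hk hkg]
  linarith

theorem le (h : IsLambdaBar g n a b) {j : ℕ} (hj : 1 ≤ j) (hjg : j ≤ g) : a j ≤ b j := by
  induction j, hj using Nat.le_induction with
  | base => exact h.one.ge
  | succ k hk ih =>
    have := h.add_le_succ_of_le hk hjg (ih (by omega))
    linarith [(h.nonneg k hk (by omega)).trans (ih (by omega))]

theorem nonneg_bar (h : IsLambdaBar g n a b) {j : ℕ} (hj : 1 ≤ j) (hjg : j ≤ g) : 0 ≤ b j :=
  (h.nonneg j hj hjg).trans (h.le hj hjg)

theorem add_le_succ (h : IsLambdaBar g n a b) {k : ℕ} (hk : 1 ≤ k) (hkg : k < g) :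
    b k + a (k + 1) ≤ b (k + 1) :=
  h.add_le_succ_of_le hk hkg (h.le hk hkg.le)

theorem monotoneOn (h : IsLambdaBar g n a b) : MonotoneOn b (Set.Icc 1 g) := by
  refine monotoneOn_of_le_succ Set.ordConnected_Icc fun k _ hk hk' => ?_
  simp only [Order.succ_eq_add_one, Set.mem_Icc] at hk hk' ⊢
  linarith [h.add_le_succ hk.1 (by omega), h.nonneg (k + 1) (by omega) hk'.2]

theorem le_of_le (h : IsLambdaBar g n a b) {m j : ℕ} (hm : 1 ≤ m) (hmj : m ≤ j) (hjg : j ≤ g) :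
    a m ≤ b j :=
  (h.le hm (hmj.trans hjg)).trans (h.monotoneOn ⟨hm, hmj.trans hjg⟩ ⟨hm.trans hmj, hjg⟩ hmj)

end IsLambdaBar

theorem exists_intCast_of_mem_closure_single {ι : Type*} [DecidableEq ι] {x : ι → ℚ}
    (hx : x ∈ AddSubgroup.closure (Set.range fun i => (Pi.single i 1 : ι → ℚ))) (i : ι) :
    ∃ z : ℤ, x i = z := by
  induction hx using AddSubgroup.closure_induction with
  | mem _ hx =>
    obtain ⟨j, rfl⟩ := hx
    exact ⟨(Pi.single j 1 : ι → ℤ) i, by rcases eq_or_ne i j with rfl | hij <;> simp [*]⟩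
  | zero => exact ⟨0, by simp⟩
  | add _ _ _ _ hx hy =>
    obtain ⟨z, hz⟩ := hx
    obtain ⟨z', hz'⟩ := hy
    exact ⟨z + z', by simp [hz, hz']⟩
  | neg _ _ hx =>
    obtain ⟨z, hz⟩ := hx
    exact ⟨-z, by simp [hz]⟩

theorem one_le_relIndex_mul_apply {ι : Type*} [DecidableEq ι] {H K : AddSubgroup (ι → ℚ)}
    (hH : H ≤ AddSubgroup.closure (Set.range fun i => (Pi.single i 1 : ι → ℚ)))
    (hK : H.relIndex K ≠ 0) {x : ι → ℚ} (hx : x ∈ K) {i : ι} (hxi : 0 < x i) :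
    1 ≤ (H.relIndex K : ℚ) * x i := by
  obtain ⟨z, hz⟩ := exists_intCast_of_mem_closure_single (hH (H.nsmul_relIndex_mem hx)) i
  rw [Pi.smul_apply, nsmul_eq_mul] at hz
  have hz_pos : (0 : ℚ) < z := hz ▸ mul_pos (Nat.cast_pos.mpr (Nat.pos_of_ne_zero hK)) hxi
  rw [hz]
  exact_mod_cast (Int.cast_pos.mp hz_pos : 0 < z)

def xi (g m1 m2 : ℕ) (lam : ℕ → Fin 2 → ℚ) : Set (Fin 2 → ℚ) :=
  ({Pi.single 0 1 + Pi.single 1 1} : Set (Fin 2 → ℚ))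
    ∪ {v | m1 ≤ g ∧ v = Pi.single 1 1 + lam m1}
    ∪ {v | m2 ≤ g ∧ v = Pi.single 0 1 + lam m2}

section CharacteristicExponents

variable {g : ℕ} {lam lamb : ℕ → Fin 2 → ℚ} {n : ℕ → ℕ}

theorem lam_le_lamb (hL : ∀ i, IsLambdaBar g n (lam · i) (lamb · i)) {m j : ℕ} (hm : 1 ≤ m)
    (hmj : m ≤ j) (hjg : j ≤ g) : lam m ≤ lamb j :=
  fun i => (hL i).le_of_le hm hmj hjg

theorem one_le_lamb_two_zero {Msub : ℕ → AddSubgroup (Fin 2 → ℚ)}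
    (hM : ∀ j, Msub j = AddSubgroup.closure
      ((Set.range fun i : Fin 2 => (Pi.single i 1 : Fin 2 → ℚ)) ∪ (lam '' Set.Icc 1 j)))
    (hL : ∀ i, IsLambdaBar g n (lam · i) (lamb · i)) (hg : 2 ≤ g)
    (hindex : (Msub 0).relIndex (Msub 1) = n 1) (hchain : lam 1 ≤ lam 2) (hlam : lam 1 0 ≠ 0) :
    1 ≤ lamb 2 0 := by
  have hM0 : Msub 0 = AddSubgroup.closure
      (Set.range fun i : Fin 2 => (Pi.single i 1 : Fin 2 → ℚ)) := by
    simp [hM 0]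
  have hlam1 : lam 1 ∈ Msub 1 := hM 1 ▸ AddSubgroup.subset_closure (Or.inr ⟨1, by simp, rfl⟩)
  have hpos : 0 < lam 1 0 := ((hL 0).nonneg 1 le_rfl (by omega)).lt_of_ne' hlam
  have hn1 : n 1 ≠ 0 := by have := (hL 0).two_le 1 le_rfl hg; omega
  have hinteger := one_le_relIndex_mul_apply hM0.le (hindex ▸ hn1) hlam1 hpos
  have hrec := (hL 0).succ 1 le_rfl hg
  rw [hindex] at hinteger
  rw [(hL 0).one] at hrec
  linarith [hchain 0]

theorem one_le_lamb_zero (hL : ∀ i, IsLambdaBar g n (lam · i) (lamb · i))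
    (hnorm : lam 1 1 = 0 → 1 < lam 1 0) (htwo : 2 ≤ g → 1 ≤ lamb 2 0) {k : ℕ} (hk : 1 ≤ k)
    (hkg : k ≤ g) (h : 2 ≤ k ∨ lamb k 1 = 0) : 1 ≤ lamb k 0 := by
  rcases Nat.lt_or_ge k 2 with hk2 | hk2
  · obtain rfl : k = 1 := by omega
    have h1 := h.resolve_left (by omega)
    rw [(hL 1).one] at h1
    rw [(hL 0).one]
    exact (hnorm h1).le
  · exact (htwo (hk2.trans hkg)).trans ((hL 0).monotoneOn ⟨by omega, by omega⟩ ⟨hk, hkg⟩ hk2)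

theorem single_add_lam_le_lamb_add_lamb (hL : ∀ i, IsLambdaBar g n (lam · i) (lamb · i))
    (hnorm : lam 1 1 = 0 → 1 < lam 1 0) (htwo : 2 ≤ g → 1 ≤ lamb 2 0) {m : ℕ} (hm : 1 ≤ m)
    (hmin : ∀ j, 1 ≤ j → j < m → lamb j 1 = 0) {j k : ℕ} (hj : 1 ≤ j) (hjk : j < k)
    (hmk : m ≤ k) (hkg : k ≤ g) :
    Pi.single 0 1 + lam m ≤ lamb j + lamb k := by
  have hlamb_j i := (hL i).nonneg_bar hj (by omega)
  have hlam_m := lam_le_lamb hL hm hmk hkg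
  intro i
  fin_cases i
  · simp only [Fin.zero_eta, Fin.isValue, Pi.add_apply, Pi.single_eq_same]
    rcases le_or_gt m j with hmj | hjm
    · linarith [lam_le_lamb hL hm hmj (by omega) 0,
        one_le_lamb_zero hL hnorm htwo (by omega) hkg (Or.inl (by omega))]
    · obtain ⟨p, rfl⟩ : ∃ p, m = p + 1 := ⟨m - 1, by omega⟩
      -- the unit comes from `λ̄_p`, which precedes `m` and so has vanishing second coordinate
      have := (hL 0).add_le_succ (k := p) (by omega) (by omega)
      have := (hL 0).monotoneOn ⟨hm, by omega⟩ ⟨by omega, hkg⟩ hmk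
      have := one_le_lamb_zero hL hnorm htwo (k := p) (by omega) (by omega)
        (Or.inr (hmin p (by omega) (by omega)))
      linarith [hlamb_j 0]
  · simpa using add_le_add (hlamb_j 1) (hlam_m 1)

theorem exists_mem_xi_le_lamb_add_lamb (hL : ∀ i, IsLambdaBar g n (lam · i) (lamb · i))
    (hnorm : lam 1 1 = 0 → 1 < lam 1 0) (htwo : 2 ≤ g → 1 ≤ lamb 2 0) {m1 m2 : ℕ} (hm2 : 1 ≤ m2)
    (hmin : ∀ j, 1 ≤ j → j < m2 → lamb j 1 = 0) {j k : ℕ} (hj : 1 ≤ j) (hjg : j ≤ g) (hk : 1 ≤ k)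
    (hkg : k ≤ g) (hjk : j ≠ k) (h : lamb j 1 ≠ 0 ∨ lamb k 1 ≠ 0) :
    ∃ β ∈ xi g m1 m2 lam, β ≤ lamb j + lamb k := by
  wlog hlt : j < k generalizing j k
  · rw [add_comm]
    exact this hk hkg hj hjg hjk.symm h.symm (by omega)
  have hmk : m2 ≤ k := by
    by_contra hkm
    rcases h with h | h <;> exact h (hmin _ (by omega) (by omega))
  exact ⟨_, Or.inr ⟨hmk.trans hkg, rfl⟩,
    single_add_lam_le_lamb_add_lamb hL hnorm htwo hm2 hmin hj hlt hmk hkg⟩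

theorem exists_mem_xi_le_single_zero_add (hL : ∀ i, IsLambdaBar g n (lam · i) (lamb · i))
    {m1 m2 : ℕ} (hm2 : 1 ≤ m2) (hmin : ∀ j, 1 ≤ j → j < m2 → lamb j 1 = 0) {k : ℕ} (hk : 1 ≤ k)
    (hkg : k ≤ g) (h : lamb k 1 ≠ 0) :
    ∃ β ∈ xi g m1 m2 lam, β ≤ Pi.single 0 1 + lamb k := by
  have hmk : m2 ≤ k := not_lt.mp fun hkm => h (hmin k hk hkm)
  exact ⟨_, Or.inr ⟨hmk.trans hkg, rfl⟩, add_le_add_right (lam_le_lamb hL hm2 hmk hkg) _⟩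

theorem exists_mem_xi_le_single_one_add (hL : ∀ i, IsLambdaBar g n (lam · i) (lamb · i))
    {m2 k : ℕ} (hk : 1 ≤ k) (hkg : k ≤ g) :
    ∃ β ∈ xi g 1 m2 lam, β ≤ Pi.single 1 1 + lamb k :=
  ⟨_, Or.inl (Or.inr ⟨hk.trans hkg, rfl⟩), add_le_add_right (lam_le_lamb hL le_rfl hk hkg) _⟩

end CharacteristicExponents

/-- Monomial ideal inclusion I_g ⊂ J_g in dimension d = 2: for any pair of
semigroup generators γ, γ' ∈ {e_1, e_2, λ̄_1, …, λ̄_g} with γ ∧ γ' ≠ 0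
(i.e. γ, γ' linearly independent over ℚ), there is an exponent β in the set
Ξ_g = {e_1+e_2} ∪ {e_2 + λ_{m_1} if m_1 ≤ g} ∪ {e_1 + λ_{m_2} if m_2 ≤ g}
with β ⪯ γ + γ' coordinatewise. -/
theorem stmt18 (g : ℕ) (lam lamb : ℕ → (Fin 2 → ℚ)) (n : ℕ → ℕ)
    (Msub : ℕ → AddSubgroup (Fin 2 → ℚ))
    (hM : ∀ j, Msub j = AddSubgroup.closure
      ((Set.range fun i : Fin 2 => (Pi.single i 1 : Fin 2 → ℚ)) ∪
        (lam '' Set.Icc 1 j)))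
    (hpos : ∀ j, 1 ≤ j → j ≤ g → ∀ i, 0 ≤ lam j i)
    (hchain : ∀ j, 1 ≤ j → j < g → lam j ≤ lam (j + 1) ∧ lam j ≠ lam (j + 1))
    (hn : ∀ j, 1 ≤ j → j ≤ g → 2 ≤ n j)
    (hindex : ∀ j, 1 ≤ j → j ≤ g → (Msub (j - 1)).relIndex (Msub j) = n j)
    (hb1 : lamb 1 = lam 1)
    (hbrec : ∀ j, 1 ≤ j → j < g →
      lamb (j + 1) = (n j : ℚ) • lamb j + lam (j + 1) - lam j)
    -- normalized branch: λ_{1,1} ≠ 0 and if λ_{1,2} = 0 then λ_{1,1} > 1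
    (hnorm : lam 1 0 ≠ 0 ∧ (lam 1 1 = 0 → 1 < lam 1 0))
    (m1 m2 : ℕ)
    (hm1 : 1 ≤ m1 ∧ m1 ≤ g + 1 ∧ (∀ j, 1 ≤ j → j < m1 → lamb j 0 = 0) ∧
      (m1 ≤ g → lamb m1 0 ≠ 0))
    (hm2 : 1 ≤ m2 ∧ m2 ≤ g + 1 ∧ (∀ j, 1 ≤ j → j < m2 → lamb j 1 = 0) ∧
      (m2 ≤ g → lamb m2 1 ≠ 0))
    (γ γ' : Fin 2 → ℚ)
    (hγ : γ ∈ insert (Pi.single 0 1 : Fin 2 → ℚ)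
      (insert (Pi.single 1 1) (lamb '' Set.Icc 1 g)))
    (hγ' : γ' ∈ insert (Pi.single 0 1 : Fin 2 → ℚ)
      (insert (Pi.single 1 1) (lamb '' Set.Icc 1 g)))
    (hind : LinearIndependent ℚ ![γ, γ']) :
    ∃ β ∈ ({Pi.single 0 1 + Pi.single 1 1} : Set (Fin 2 → ℚ))
        ∪ {v | m1 ≤ g ∧ v = Pi.single 1 1 + lam m1}
        ∪ {v | m2 ≤ g ∧ v = Pi.single 0 1 + lam m2},
      β ≤ γ + γ' := by
  obtain ⟨hm1, -, hm1min, -⟩ := hm1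
  obtain ⟨hm2, -, hm2min, -⟩ := hm2
  have hL : ∀ i, IsLambdaBar g n (lam · i) (lamb · i) := fun i =>
    ⟨fun j hj hjg => hpos j hj hjg i, fun j hj hjg => hn j hj hjg.le, congrFun hb1 i,
      fun j hj hjg => by simp [hbrec j hj hjg]⟩
  have htwo (hg : 2 ≤ g) : 1 ≤ lamb 2 0 :=
    one_le_lamb_two_zero hM hL hg (hindex 1 le_rfl (by omega)) (hchain 1 le_rfl hg).1 hnorm.1
  obtain rfl : m1 = 1 := by
    by_contra h
    exact hnorm.1 (hb1 ▸ hm1min 1 le_rfl (by omega))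
  have hne : γ ≠ γ' := by simpa using hind.injective.ne Fin.zero_ne_one
  obtain ⟨i, hi, hsnd⟩ := hind.pair_exists_ne_apply_ne_zero 0
  obtain rfl := Fin.eq_one_of_ne_zero i hi
  show ∃ β ∈ xi g 1 m2 lam, β ≤ γ + γ'
  simp only [Set.mem_insert_iff, Set.mem_image, Set.mem_Icc] at hγ hγ'
  rcases hγ with rfl | rfl | ⟨j, ⟨hj, hjg⟩, rfl⟩ <;>
    rcases hγ' with rfl | rfl | ⟨k, ⟨hk, hkg⟩, rfl⟩
  · exact absurd rfl hne
  · exact ⟨_, Or.inl (Or.inl rfl), le_rfl⟩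
  · exact exists_mem_xi_le_single_zero_add hL hm2 hm2min hk hkg (by simpa using hsnd)
  · exact ⟨_, Or.inl (Or.inl rfl), (add_comm _ _).le⟩
  · exact absurd rfl hne
  · exact exists_mem_xi_le_single_one_add hL hk hkg
  · rw [add_comm]
    exact exists_mem_xi_le_single_zero_add hL hm2 hm2min hj hjg (by simpa using hsnd)
  · rw [add_comm]
    exact exists_mem_xi_le_single_one_add hL hj hjg
  · exact exists_mem_xi_le_lamb_add_lamb hL hnorm.2 htwo hm2 hm2min hj hjg hk hkg
      (by rintro rfl; exact hne rfl) hsnd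
end
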